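/- arXiv:2401.01137 — 2 statements merged into one kernel-verified Lean document; each statement's English description precedes it below -/
import Mathlib

section
/- Let p be a prime, S ⊆ ℤ/pℤ, and F, R : S → ℤ/pℤ. Suppose that for all (n,ξ) ∈ (ℤ/pℤ)² with (n,ξ) ≠ (0,0), |∑_{y ∈ S} e_p(n F(y) + ξ R(y))| ≤ C p^{1/2}. Then for all f₀, f₁ : ℤ/pℤ → ℂ and all ξ ∈ ℤ/pℤ, (1/p²)∑_{x ∈ ℤ/pℤ, y ∈ S} f₀(x) f₁(x+F(y)) e_p(ξ R(y)) = 1_{ξ=0} · (|S|/p) · (𝔼_z f₀(z)) (𝔼_z f₁(z)) + E, with |E| ≤ C p^{-1/2} ‖f₀‖₂ ‖f₁‖₂. -/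
open Finset

noncomputable def ep (p : ℕ) (x : ZMod p) : ℂ :=
  Complex.exp (2 * Real.pi * Complex.I * x.val / p)

noncomputable def ft (p : ℕ) [NeZero p] (f : ZMod p → ℂ) (ξ : ZMod p) : ℂ :=
  (1 / p) * ∑ x : ZMod p, f x * ep p (-(x * ξ))

noncomputable def L2 (p : ℕ) [NeZero p] (f : ZMod p → ℂ) : ℝ :=
  Real.sqrt ((1 / p) * ∑ x : ZMod p, ‖f x‖ ^ 2)

/-! Writing `f₀` and `f₁` in Fourier series turns the count into
`(1/p) ∑ₙ ft f₀ (-n) ft f₁ n T(n)` with `T(n) = ∑_{y ∈ S} e_p(n F(y) + ξ R(y))`.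
The frequency `n = 0` with `ξ = 0` gives the main term; every other `T(n)` is at most `C √p`,
and by Cauchy–Schwarz and Parseval `∑ₙ |ft f₀ (-n)| |ft f₁ n| ≤ ‖f₀‖₂ ‖f₁‖₂`. -/

open ComplexConjugate

section Fourier

variable {p : ℕ} [NeZero p]

lemma ep_eq_stdAddChar (x : ZMod p) : ep p x = ZMod.stdAddChar x := by
  rw [ZMod.stdAddChar_apply, ZMod.toCircle_apply, ep]

lemma ep_add (a b : ZMod p) : ep p (a + b) = ep p a * ep p b := by
  simp only [ep_eq_stdAddChar, AddChar.map_add_eq_mul]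

lemma ep_zero : ep p 0 = 1 := by
  simp only [ep_eq_stdAddChar, AddChar.map_zero_eq_one]

lemma ep_neg (a : ZMod p) : ep p (-a) = conj (ep p a) := by
  simp only [ep_eq_stdAddChar, AddChar.map_neg_eq_conj]

lemma sum_ep_mul (a : ZMod p) : ∑ n, ep p (n * a) = if a = 0 then (p : ℂ) else 0 := by
  simp only [ep_eq_stdAddChar, AddChar.sum_mulShift a (ZMod.isPrimitive_stdAddChar p),
    ZMod.card, Nat.cast_ite, Nat.cast_zero]

lemma ft_zero (f : ZMod p → ℂ) : ft p f 0 = (1 / p) * ∑ x, f x := by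
  simp only [ft, mul_zero, neg_zero, ep_zero, mul_one]

lemma ft_conj_neg (f : ZMod p → ℂ) (n : ZMod p) :
    ft p (fun x ↦ conj (f x)) (-n) = conj (ft p f n) := by
  simp only [ft, map_mul, map_sum, ← ep_neg, map_div₀, map_one, map_natCast, mul_neg, neg_neg]

lemma sum_ft_neg_mul_ft_mul_ep (g h : ZMod p → ℂ) (a : ZMod p) :
    ∑ n, ft p g (-n) * ft p h n * ep p (n * a) = (1 / p) * ∑ x, g x * h (x + a) := by
  have hp : (p : ℂ) ≠ 0 := Nat.cast_ne_zero.mpr (NeZero.ne p)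
  calc ∑ n, ft p g (-n) * ft p h n * ep p (n * a)
      = ∑ n, ∑ x, ∑ z, (1 / p) ^ 2 * (g x * h z) * ep p (n * (x + a - z)) := by
        refine sum_congr rfl fun n _ ↦ ?_
        rw [ft, ft, mul_mul_mul_comm, sum_mul_sum, mul_sum, sum_mul]
        refine sum_congr rfl fun x _ ↦ ?_
        rw [mul_sum, sum_mul]
        refine sum_congr rfl fun z _ ↦ ?_
        rw [show n * (x + a - z) = -(x * -n) + -(z * n) + n * a by ring, ep_add, ep_add]
        ring
    _ = (1 / p) ^ 2 * ∑ x, ∑ z, g x * h z * ∑ n, ep p (n * (x + a - z)) := by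
        simp only [mul_sum]
        rw [sum_comm]
        refine sum_congr rfl fun x _ ↦ ?_
        rw [sum_comm]
        simp only [mul_assoc]
    _ = (1 / p) * ∑ x, g x * h (x + a) := by
        simp only [sum_ep_mul, sub_eq_zero, mul_ite, mul_zero, sum_ite_eq,
          mem_univ, if_true, mul_sum]
        refine sum_congr rfl fun x _ ↦ ?_
        field_simp

lemma L2_nonneg (f : ZMod p → ℂ) : 0 ≤ L2 p f := Real.sqrt_nonneg _

lemma sum_norm_ft_sq (f : ZMod p → ℂ) : ∑ n, ‖ft p f n‖ ^ 2 = L2 p f ^ 2 := by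
  have h := sum_ft_neg_mul_ft_mul_ep (fun x ↦ conj (f x)) f 0
  simp only [ft_conj_neg, mul_zero, ep_zero, mul_one, add_zero, Complex.conj_mul'] at h
  rw [L2, Real.sq_sqrt (by positivity)]
  apply Complex.ofReal_injective
  push_cast
  exact h

lemma sum_norm_ft_neg_mul_norm_ft_le (f₀ f₁ : ZMod p → ℂ) :
    ∑ n, ‖ft p f₀ (-n)‖ * ‖ft p f₁ n‖ ≤ L2 p f₀ * L2 p f₁ := by
  have h_neg : ∑ n, ‖ft p f₀ (-n)‖ ^ 2 = ∑ n, ‖ft p f₀ n‖ ^ 2 :=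
    Equiv.sum_comp (Equiv.neg _) (fun n ↦ ‖ft p f₀ n‖ ^ 2)
  refine (Real.sum_mul_le_sqrt_mul_sqrt _ _ _).trans_eq ?_
  rw [h_neg, sum_norm_ft_sq, sum_norm_ft_sq,
    Real.sqrt_sq (L2_nonneg f₀), Real.sqrt_sq (L2_nonneg f₁)]

lemma norm_sum_ft_mul_le (f₀ f₁ T : ZMod p → ℂ) (A : Finset (ZMod p)) {B : ℝ} (hB : 0 ≤ B)
    (hT : ∀ n ∈ A, ‖T n‖ ≤ B) :
    ‖(1 / p : ℂ) * ∑ n ∈ A, ft p f₀ (-n) * ft p f₁ n * T n‖ ≤ B / p * (L2 p f₀ * L2 p f₁) := by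
  calc ‖(1 / p : ℂ) * ∑ n ∈ A, ft p f₀ (-n) * ft p f₁ n * T n‖
      ≤ 1 / p * ∑ n ∈ A, ‖ft p f₀ (-n)‖ * ‖ft p f₁ n‖ * B := by
        rw [norm_mul, norm_div, norm_one, Complex.norm_natCast]
        gcongr
        refine (norm_sum_le _ _).trans (sum_le_sum fun n hn ↦ ?_)
        rw [norm_mul, norm_mul]
        gcongr
        exact hT n hn
    _ ≤ 1 / p * ∑ n, ‖ft p f₀ (-n)‖ * ‖ft p f₁ n‖ * B := by
        gcongr 1 / p * ?_
        exact sum_le_sum_of_subset_of_nonneg (subset_univ A) fun _ _ _ ↦ by positivity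
    _ = B / p * ∑ n, ‖ft p f₀ (-n)‖ * ‖ft p f₁ n‖ := by
        rw [← sum_mul]
        ring
    _ ≤ B / p * (L2 p f₀ * L2 p f₁) := by
        gcongr
        exact sum_norm_ft_neg_mul_norm_ft_le f₀ f₁

lemma two_term_sum_eq_sum_ft (S : Finset (ZMod p)) (F R : ZMod p → ZMod p) (f₀ f₁ : ZMod p → ℂ)
    (ξ : ZMod p) :
    (1 / p ^ 2 : ℂ) * ∑ x, ∑ y ∈ S, f₀ x * f₁ (x + F y) * ep p (ξ * R y) =
      (1 / p) * ∑ n, ft p f₀ (-n) * ft p f₁ n * ∑ y ∈ S, ep p (n * F y + ξ * R y) := by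
  have hy : ∀ y, ∑ n, ft p f₀ (-n) * ft p f₁ n * ep p (n * F y + ξ * R y) =
      (1 / p) * (∑ x, f₀ x * f₁ (x + F y)) * ep p (ξ * R y) := by
    intro y
    simp only [ep_add, ← mul_assoc, ← sum_mul, sum_ft_neg_mul_ft_mul_ep]
  calc (1 / p ^ 2 : ℂ) * ∑ x, ∑ y ∈ S, f₀ x * f₁ (x + F y) * ep p (ξ * R y)
      = (1 / p ^ 2) * ∑ y ∈ S, (∑ x, f₀ x * f₁ (x + F y)) * ep p (ξ * R y) := by
        rw [sum_comm]
        simp only [sum_mul]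
    _ = (1 / p) * ∑ y ∈ S, ∑ n, ft p f₀ (-n) * ft p f₁ n * ep p (n * F y + ξ * R y) := by
        rw [mul_sum, mul_sum]
        refine sum_congr rfl fun y _ ↦ ?_
        rw [hy]
        ring
    _ = (1 / p) * ∑ n, ft p f₀ (-n) * ft p f₁ n * ∑ y ∈ S, ep p (n * F y + ξ * R y) := by
        rw [sum_comm]
        simp only [mul_sum]

end Fourier

theorem twisted_two_term_count (p : ℕ) [Fact p.Prime]
    (S : Finset (ZMod p)) (F R : ZMod p → ZMod p) (C : ℝ)
    (hexp : ∀ n ξ : ZMod p, ¬(n = 0 ∧ ξ = 0) →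
      ‖∑ y ∈ S, ep p (n * F y + ξ * R y)‖ ≤ C * Real.sqrt p)
    (f₀ f₁ : ZMod p → ℂ) (ξ : ZMod p) :
    ‖(1 / p ^ 2) * (∑ x : ZMod p, ∑ y ∈ S, f₀ x * f₁ (x + F y) * ep p (ξ * R y)) -
        (if ξ = 0 then 1 else 0) * ((S.card : ℂ) / p) *
          ((1 / p) * ∑ z : ZMod p, f₀ z) * ((1 / p) * ∑ z : ZMod p, f₁ z)‖ ≤
      C * (p : ℝ) ^ (-(1 : ℝ) / 2) * L2 p f₀ * L2 p f₁ := by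
  have hp : (0 : ℝ) < p := Nat.cast_pos.mpr (Fact.out : p.Prime).pos
  have hB : 0 ≤ C * √p := (norm_nonneg _).trans (hexp 1 0 (by simp))
  have h_rpow : C * (p : ℝ) ^ (-(1 : ℝ) / 2) * L2 p f₀ * L2 p f₁ =
      C * √p / p * (L2 p f₀ * L2 p f₁) := by
    rw [neg_div, Real.rpow_neg hp.le, ← Real.sqrt_eq_rpow]
    field_simp
    rw [Real.sq_sqrt hp.le]
    ring
  rw [two_term_sum_eq_sum_ft, h_rpow]
  by_cases hξ : ξ = 0
  · subst hξ
    have h_zero : (1 / p : ℂ) * (ft p f₀ (-0) * ft p f₁ 0 * ∑ y ∈ S, ep p (0 * F y + 0 * R y)) =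
        1 * (S.card / p) * ((1 / p) * ∑ z, f₀ z) * ((1 / p) * ∑ z, f₁ z) := by
      simp only [neg_zero, ft_zero, zero_mul, add_zero, ep_zero, sum_const, nsmul_eq_mul, mul_one]
      ring
    rw [if_pos rfl, ← add_sum_erase _ _ (mem_univ 0), mul_add, h_zero, add_sub_cancel_left]
    exact norm_sum_ft_mul_le f₀ f₁ _ _ hB fun n hn ↦ hexp n 0 fun h ↦ (mem_erase.mp hn).1 h.1
  · rw [if_neg hξ, zero_mul, zero_mul, zero_mul, sub_zero]
    exact norm_sum_ft_mul_le f₀ f₁ _ univ hB fun n _ ↦ hexp n ξ fun h ↦ hξ h.2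
end

section
/- Suppose F, G ∈ ℚ(t) are rational functions and c ∈ ℚ, c ≠ 0, are such that the differential equation (G'/F')' = ((F' - G')/c)·(G'/F') holds as an identity of rational functions (assuming F' ≠ 0). Then either G'/F' = 0 or F - G is a constant rational function. -/
open Polynomial

/-- The derivative of a rational function over ℚ, via the quotient rule on
numerator and denominator. -/
noncomputable def rd (F : RatFunc ℚ) : RatFunc ℚ :=
  (algebraMap (Polynomial ℚ) (RatFunc ℚ) (Polynomial.derivative F.num) *
      algebraMap (Polynomial ℚ) (RatFunc ℚ) F.denom -
    algebraMap (Polynomial ℚ) (RatFunc ℚ) F.num *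
      algebraMap (Polynomial ℚ) (RatFunc ℚ) (Polynomial.derivative F.denom)) /
  algebraMap (Polynomial ℚ) (RatFunc ℚ) F.denom ^ 2

lemma rd_apply (f : RatFunc ℚ) (p q : Polynomial ℚ) (hq : q ≠ 0)
    (h : f = algebraMap (Polynomial ℚ) (RatFunc ℚ) p / algebraMap (Polynomial ℚ) (RatFunc ℚ) q) :
    rd f = algebraMap (Polynomial ℚ) (RatFunc ℚ) (derivative p * q - p * derivative q) /
      algebraMap (Polynomial ℚ) (RatFunc ℚ) (q ^ 2) := by
  have hD : f.denom ≠ 0 := f.denom_ne_zero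
  have hqq : algebraMap (Polynomial ℚ) (RatFunc ℚ) q ≠ 0 := RatFunc.algebraMap_ne_zero hq
  have hDD : algebraMap (Polynomial ℚ) (RatFunc ℚ) f.denom ≠ 0 := RatFunc.algebraMap_ne_zero hD
  have key : p * f.denom = f.num * q := by
    apply RatFunc.algebraMap_injective
    have hfrac : algebraMap (Polynomial ℚ) (RatFunc ℚ) p / algebraMap (Polynomial ℚ) (RatFunc ℚ) q
        = algebraMap (Polynomial ℚ) (RatFunc ℚ) f.num / algebraMap (Polynomial ℚ) (RatFunc ℚ) f.denom := by
      rw [← h, RatFunc.num_div_denom]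
    rw [div_eq_div_iff hqq hDD] at hfrac
    rw [map_mul, map_mul]
    exact hfrac
  have key' : derivative p * f.denom + p * derivative f.denom =
      derivative f.num * q + f.num * derivative q := by
    have := congrArg derivative key
    simpa [derivative_mul] using this
  rw [rd]
  rw [div_eq_div_iff (pow_ne_zero 2 hDD) (by exact RatFunc.algebraMap_ne_zero (pow_ne_zero 2 hq))]
  have : (derivative f.num * f.denom - f.num * derivative f.denom) * q ^ 2 =
      (derivative p * q - p * derivative q) * f.denom ^ 2 := by
    linear_combination (-(q * f.denom)) * key' +
      (derivative q * f.denom + derivative f.denom * q) * key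
  simp only [← map_pow, ← map_mul, ← map_sub]
  exact congrArg _ this

lemma rd_algebraMap (p : Polynomial ℚ) :
    rd (algebraMap (Polynomial ℚ) (RatFunc ℚ) p) = algebraMap (Polynomial ℚ) (RatFunc ℚ) (derivative p) := by
  rw [rd_apply _ p 1 one_ne_zero (by simp)]
  simp

lemma rd_sub (f g : RatFunc ℚ) : rd (f - g) = rd f - rd g := by
  have hf : f = algebraMap (Polynomial ℚ) (RatFunc ℚ) f.num / algebraMap (Polynomial ℚ) (RatFunc ℚ) f.denom :=
    (RatFunc.num_div_denom f).symm
  have hg : g = algebraMap (Polynomial ℚ) (RatFunc ℚ) g.num / algebraMap (Polynomial ℚ) (RatFunc ℚ) g.denom :=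
    (RatFunc.num_div_denom g).symm
  have hfD : algebraMap (Polynomial ℚ) (RatFunc ℚ) f.denom ≠ 0 := RatFunc.algebraMap_ne_zero f.denom_ne_zero
  have hgD : algebraMap (Polynomial ℚ) (RatFunc ℚ) g.denom ≠ 0 := RatFunc.algebraMap_ne_zero g.denom_ne_zero
  have hfe : algebraMap (Polynomial ℚ) (RatFunc ℚ) f.num = f * algebraMap (Polynomial ℚ) (RatFunc ℚ) f.denom :=
    (div_eq_iff hfD).mp (RatFunc.num_div_denom f)
  have hge : algebraMap (Polynomial ℚ) (RatFunc ℚ) g.num = g * algebraMap (Polynomial ℚ) (RatFunc ℚ) g.denom :=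
    (div_eq_iff hgD).mp (RatFunc.num_div_denom g)
  have hsub : f - g = algebraMap (Polynomial ℚ) (RatFunc ℚ) (f.num * g.denom - g.num * f.denom) /
      algebraMap (Polynomial ℚ) (RatFunc ℚ) (f.denom * g.denom) := by
    rw [eq_div_iff (RatFunc.algebraMap_ne_zero (mul_ne_zero f.denom_ne_zero g.denom_ne_zero))]
    rw [map_sub, map_mul, map_mul, map_mul, hfe, hge]
    ring
  rw [rd_apply f f.num f.denom f.denom_ne_zero hf, rd_apply g g.num g.denom g.denom_ne_zero hg,
    rd_apply (f - g) _ _ (mul_ne_zero f.denom_ne_zero g.denom_ne_zero) hsub]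
  have h2f : algebraMap (Polynomial ℚ) (RatFunc ℚ) (f.denom ^ 2) ≠ 0 :=
    RatFunc.algebraMap_ne_zero (pow_ne_zero 2 f.denom_ne_zero)
  have h2g : algebraMap (Polynomial ℚ) (RatFunc ℚ) (g.denom ^ 2) ≠ 0 :=
    RatFunc.algebraMap_ne_zero (pow_ne_zero 2 g.denom_ne_zero)
  have h2fg : algebraMap (Polynomial ℚ) (RatFunc ℚ) ((f.denom * g.denom) ^ 2) ≠ 0 :=
    RatFunc.algebraMap_ne_zero (pow_ne_zero 2 (mul_ne_zero f.denom_ne_zero g.denom_ne_zero))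
  rw [div_sub_div _ _ h2f h2g, div_eq_div_iff h2fg (by exact mul_ne_zero h2f h2g)]
  simp only [← map_pow, ← map_mul, ← map_sub]
  apply congrArg
  simp only [derivative_sub, derivative_mul]
  ring

lemma rd_eq_zero {f : RatFunc ℚ} (h : rd f = 0) : ∃ d : ℚ, f = RatFunc.C d := by
  have hD : f.denom ≠ 0 := f.denom_ne_zero
  have h2 : algebraMap (Polynomial ℚ) (RatFunc ℚ) (derivative f.num) * algebraMap (Polynomial ℚ) (RatFunc ℚ) f.denom -
      algebraMap (Polynomial ℚ) (RatFunc ℚ) f.num * algebraMap (Polynomial ℚ) (RatFunc ℚ) (derivative f.denom) = 0 := by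
    rw [rd, _root_.div_eq_zero_iff] at h
    rcases h with h | h
    · exact h
    · exact absurd h (pow_ne_zero 2 (RatFunc.algebraMap_ne_zero hD))
  have hnum : derivative f.num * f.denom - f.num * derivative f.denom = 0 := by
    apply RatFunc.algebraMap_injective
    rw [map_sub, map_mul, map_mul, map_zero]
    exact h2
  have hdvd : f.denom ∣ f.num * derivative f.denom := ⟨derivative f.num, by linear_combination -hnum⟩
  have hdd : f.denom ∣ derivative f.denom := (f.isCoprime_num_denom.symm).dvd_of_dvd_mul_left hdvd
  have hD' : derivative f.denom = 0 :=
    Polynomial.eq_zero_of_dvd_of_degree_lt hdd (Polynomial.degree_derivative_lt hD)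
  have hDone : f.denom = 1 :=
    ((RatFunc.monic_denom f).natDegree_eq_zero).mp
      (Polynomial.natDegree_eq_zero_of_derivative_eq_zero hD')
  have hN' : derivative f.num = 0 := by rw [hDone] at hnum; simpa using hnum
  refine ⟨f.num.coeff 0, ?_⟩
  conv_lhs => rw [← RatFunc.num_div_denom f, hDone, Polynomial.eq_C_of_natDegree_eq_zero
    (Polynomial.natDegree_eq_zero_of_derivative_eq_zero hN')]
  rw [map_one, div_one, RatFunc.algebraMap_C]

lemma not_dvd_C {q : Polynomial ℚ} (hq : Irreducible q) {r : ℚ} (hr : r ≠ 0) :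
    ¬ q ∣ Polynomial.C r := fun h =>
  hq.not_isUnit (isUnit_of_dvd_unit h (Polynomial.isUnit_C.mpr (isUnit_iff_ne_zero.mpr hr)))

lemma not_dvd_derivative_self {q : Polynomial ℚ} (hq : Irreducible q) : ¬ q ∣ derivative q := by
  intro hdvd
  have h0 : derivative q = 0 :=
    Polynomial.eq_zero_of_dvd_of_degree_lt hdvd (Polynomial.degree_derivative_lt hq.ne_zero)
  have := Polynomial.natDegree_eq_zero_of_derivative_eq_zero h0
  exact hq.not_isUnit (Polynomial.isUnit_iff.mpr ⟨q.coeff 0, isUnit_iff_ne_zero.mpr (by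
      intro h0'
      exact hq.ne_zero (by rw [Polynomial.eq_C_of_natDegree_eq_zero this, h0', Polynomial.C_0])),
    (Polynomial.eq_C_of_natDegree_eq_zero this).symm⟩)

lemma cross_rep {q : Polynomial ℚ} (hq : Irreducible q) (a : ℕ) (ha : 1 ≤ a) (x y : Polynomial ℚ)
    (hx : ¬ q ∣ x) (hy : ¬ q ∣ y) :
    ∃ s, derivative (q ^ a * x) * y - (q ^ a * x) * derivative y = q ^ (a - 1) * s ∧ ¬ q ∣ s := by
  refine ⟨((a : Polynomial ℚ) * derivative q * x + q * derivative x) * y - q * x * derivative y,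
    ?_, ?_⟩
  · rw [derivative_mul, Polynomial.derivative_pow]
    have hpow : q ^ a = q ^ (a - 1) * q := by rw [← pow_succ]; congr 1; omega
    rw [hpow, Polynomial.C_eq_natCast]
    ring
  · intro hdvd
    have h1 : q ∣ (q * derivative x) * y - q * x * derivative y :=
      Dvd.dvd.sub (Dvd.dvd.mul_right (Dvd.dvd.mul_right (dvd_refl q) _) _)
        (Dvd.dvd.mul_right (Dvd.dvd.mul_right (dvd_refl q) _) _)
    have h2 : q ∣ (a : Polynomial ℚ) * derivative q * x * y := by
      have := dvd_sub hdvd h1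
      convert this using 1
      ring
    rcases hq.prime.dvd_mul.mp h2 with h3 | h3
    · rcases hq.prime.dvd_mul.mp h3 with h4 | h4
      · rcases hq.prime.dvd_mul.mp h4 with h5 | h5
        · rw [← Polynomial.C_eq_natCast] at h5
          exact not_dvd_C hq (show (a : ℚ) ≠ 0 by exact_mod_cast (by omega : a ≠ 0)) h5
        · exact not_dvd_derivative_self hq h5
      · exact hx h4
    · exact hy h3

lemma key_rep {q : Polynomial ℚ} (hq : Irreducible q) (A B : Polynomial ℚ)
    (hA : A ≠ 0) (hB : B ≠ 0) (hcop : IsCoprime A B) (hqAB : q ∣ A * B) :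
    ∃ n s t, 1 ≤ n ∧ derivative A * B - A * derivative B = q ^ (n - 1) * s ∧ ¬ q ∣ s ∧
      A * B = q ^ n * t ∧ ¬ q ∣ t := by
  rcases hq.prime.dvd_mul.mp hqAB with hdA | hdB
  · have hnB : ¬ q ∣ B := fun h => hq.not_isUnit (hcop.isUnit_of_dvd' hdA h)
    obtain ⟨a, x, hx, rfl⟩ := WfDvdMonoid.max_power_factor hA hq
    have ha : 1 ≤ a := by
      by_contra h
      have : a = 0 := by omega
      rw [this, pow_zero, one_mul] at hdA
      exact hx hdA
    obtain ⟨s, hs, hqs⟩ := cross_rep hq a ha x B hx hnB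
    exact ⟨a, s, x * B, ha, hs, hqs, by ring, fun h => (hq.prime.dvd_mul.mp h).elim hx hnB⟩
  · have hnA : ¬ q ∣ A := fun h => hq.not_isUnit (hcop.isUnit_of_dvd' h hdB)
    obtain ⟨b, y, hy, rfl⟩ := WfDvdMonoid.max_power_factor hB hq
    have hb : 1 ≤ b := by
      by_contra h
      have : b = 0 := by omega
      rw [this, pow_zero, one_mul] at hdB
      exact hy hdB
    obtain ⟨s, hs, hqs⟩ := cross_rep hq b hb y A hy hnA
    refine ⟨b, -s, A * y, hb, ?_, by simpa using hqs, by ring,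
      fun h => (hq.prime.dvd_mul.mp h).elim hnA hy⟩
    rw [mul_neg, ← hs]
    ring

lemma core (A B P Q : Polynomial ℚ) (c : ℚ) (hc : c ≠ 0) (hA : A ≠ 0) (hB : B ≠ 0) (hQ : Q ≠ 0)
    (hcAB : IsCoprime A B) (hcPQ : IsCoprime P Q)
    (heq : Polynomial.C c * (derivative A * B - A * derivative B) * Q ^ 2
      = (derivative P * Q - P * derivative Q) * (A * B)) :
    derivative P * Q - P * derivative Q = 0 := by
  by_cases hP : P = 0
  · simp [hP]
  have hQu : IsUnit Q := by
    by_contra hQu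
    obtain ⟨q, hqirr, hqQ⟩ := WfDvdMonoid.exists_irreducible_factor hQu hQ
    have hnP : ¬ q ∣ P := fun h => hqirr.not_isUnit (hcPQ.isUnit_of_dvd' h hqQ)
    obtain ⟨m, u, hu, hQe⟩ := WfDvdMonoid.max_power_factor hQ hqirr
    have hm : 1 ≤ m := by
      by_contra h
      have hm0 : m = 0 := by omega
      rw [hm0, pow_zero, one_mul] at hQe
      exact hu (hQe ▸ hqQ)
    obtain ⟨k, rfl⟩ : ∃ k, m = k + 1 := ⟨m - 1, by omega⟩
    obtain ⟨s₁, hs₁, hqs₁⟩ := cross_rep hqirr (k + 1) hm u P hu hnP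
    rw [← hQe, Nat.add_sub_cancel] at hs₁
    have hcrossP : derivative P * Q - P * derivative Q = -(q ^ k * s₁) := by
      linear_combination -hs₁
    by_cases hABd : q ∣ A * B
    · obtain ⟨n, s₂, t₂, hn, hs₂, hqs₂, hABe, hqt₂⟩ := key_rep hqirr A B hA hB hcAB hABd
      obtain ⟨l, rfl⟩ : ∃ l, n = l + 1 := ⟨n - 1, by omega⟩
      rw [Nat.add_sub_cancel] at hs₂
      have hdvdL : q ^ (k + l + 2) ∣
          Polynomial.C c * (derivative A * B - A * derivative B) * Q ^ 2 := by
        rw [hs₂, hQe]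
        exact ⟨Polynomial.C c * s₂ * u ^ 2 * q ^ k, by ring⟩
      rw [heq] at hdvdL
      have hrep : (derivative P * Q - P * derivative Q) * (A * B) =
          q ^ (k + l + 1) * (-(s₁ * t₂)) := by
        rw [hcrossP, hABe]
        ring
      rw [hrep, show k + l + 2 = (k + l + 1) + 1 from rfl, pow_succ] at hdvdL
      have hqw : q ∣ -(s₁ * t₂) :=
        (mul_dvd_mul_iff_left (pow_ne_zero (k + l + 1) hqirr.ne_zero)).mp hdvdL
      rw [dvd_neg] at hqw
      exact (hqirr.prime.dvd_mul.mp hqw).elim hqs₁ hqt₂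
    · have hdvdL : q ^ (k + 1) ∣
          Polynomial.C c * (derivative A * B - A * derivative B) * Q ^ 2 := by
        rw [hQe]
        refine dvd_trans (pow_dvd_pow q (by omega : k + 1 ≤ 2 * (k + 1))) ?_
        exact ⟨Polynomial.C c * (derivative A * B - A * derivative B) * u ^ 2, by ring⟩
      rw [heq] at hdvdL
      have hrep : (derivative P * Q - P * derivative Q) * (A * B) =
          q ^ k * (-(s₁ * (A * B))) := by
        rw [hcrossP]
        ring
      rw [hrep, pow_succ] at hdvdL
      have hqw : q ∣ -(s₁ * (A * B)) :=
        (mul_dvd_mul_iff_left (pow_ne_zero k hqirr.ne_zero)).mp hdvdL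
      rw [dvd_neg] at hqw
      exact (hqirr.prime.dvd_mul.mp hqw).elim hqs₁ hABd
  obtain ⟨e, he, hQC⟩ := Polynomial.isUnit_iff.mp hQu
  have he0 : e ≠ 0 := he.ne_zero
  rw [← hQC] at heq ⊢
  suffices hDP : derivative P = 0 by
    rw [Polynomial.derivative_C, mul_zero, sub_zero, hDP, zero_mul]
  by_contra hDP
  rw [Polynomial.derivative_C, mul_zero, sub_zero] at heq
  have hABu : IsUnit (A * B) := by
    by_contra hABu
    obtain ⟨q, hqirr, hqAB⟩ := WfDvdMonoid.exists_irreducible_factor hABu (mul_ne_zero hA hB)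
    obtain ⟨n, s, t, hn, hs, hqs, hABe, hqt⟩ := key_rep hqirr A B hA hB hcAB hqAB
    obtain ⟨l, rfl⟩ : ∃ l, n = l + 1 := ⟨n - 1, by omega⟩
    rw [Nat.add_sub_cancel] at hs
    have hdvdR : q ^ (l + 1) ∣ derivative P * Polynomial.C e * (A * B) := by
      rw [hABe]
      exact ⟨derivative P * Polynomial.C e * t, by ring⟩
    rw [← heq, hs, show Polynomial.C c * (q ^ l * s) * Polynomial.C e ^ 2 =
      q ^ l * (Polynomial.C c * s * Polynomial.C e ^ 2) from by ring, pow_succ] at hdvdR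
    have hqw : q ∣ Polynomial.C c * s * Polynomial.C e ^ 2 :=
      (mul_dvd_mul_iff_left (pow_ne_zero l hqirr.ne_zero)).mp hdvdR
    rcases hqirr.prime.dvd_mul.mp hqw with h1 | h1
    · rcases hqirr.prime.dvd_mul.mp h1 with h2 | h2
      · exact not_dvd_C hqirr hc h2
      · exact hqs h2
    · exact not_dvd_C hqirr he0 (hqirr.prime.dvd_of_dvd_pow h1)
  obtain ⟨r1, hr1, hA1⟩ := Polynomial.isUnit_iff.mp (isUnit_of_mul_isUnit_left hABu)
  obtain ⟨r2, hr2, hB1⟩ := Polynomial.isUnit_iff.mp (isUnit_of_mul_isUnit_right hABu)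
  rw [← hA1, ← hB1, Polynomial.derivative_C, Polynomial.derivative_C] at heq
  have : derivative P * Polynomial.C e * (Polynomial.C r1 * Polynomial.C r2) = 0 := by
    rw [← heq]
    ring
  rcases mul_eq_zero.mp this with h1 | h1
  · rcases mul_eq_zero.mp h1 with h2 | h2
    · exact hDP h2
    · exact he0 (by simpa using congrArg (fun p => Polynomial.coeff p 0) h2)
  · rcases mul_eq_zero.mp h1 with h2 | h2
    · exact hr1.ne_zero (by simpa using congrArg (fun p => Polynomial.coeff p 0) h2)
    · exact hr2.ne_zero (by simpa using congrArg (fun p => Polynomial.coeff p 0) h2)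

theorem integrating_factor_rigidity (F G : RatFunc ℚ) (c : ℚ) (hc : c ≠ 0)
    (hF : rd F ≠ 0)
    (hode : rd (rd G / rd F) = ((rd F - rd G) / RatFunc.C c) * (rd G / rd F)) :
    rd G / rd F = 0 ∨ ∃ d : ℚ, F - G = RatFunc.C d := by
  by_cases hR : rd G / rd F = 0
  · exact Or.inl hR
  right
  have hTrd : rd F - rd G = rd (F - G) := (rd_sub F G).symm
  have hA : (rd G / rd F).num ≠ 0 := RatFunc.num_ne_zero hR
  have hB : (rd G / rd F).denom ≠ 0 := (rd G / rd F).denom_ne_zero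
  have hQ : (F - G).denom ≠ 0 := (F - G).denom_ne_zero
  have hrdR := rd_apply (rd G / rd F) _ _ hB (RatFunc.num_div_denom (rd G / rd F)).symm
  have hrdT := rd_apply (F - G) _ _ hQ (RatFunc.num_div_denom (F - G)).symm
  have h := hode
  rw [hrdR, hTrd, hrdT, ← RatFunc.algebraMap_C c] at h
  conv_rhs at h => rw [show rd G / rd F =
    algebraMap (Polynomial ℚ) (RatFunc ℚ) (rd G / rd F).num /
      algebraMap (Polynomial ℚ) (RatFunc ℚ) (rd G / rd F).denom from
    (RatFunc.num_div_denom _).symm]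
  have hBne : algebraMap (Polynomial ℚ) (RatFunc ℚ) (rd G / rd F).denom ≠ 0 :=
    RatFunc.algebraMap_ne_zero hB
  have hB2ne : algebraMap (Polynomial ℚ) (RatFunc ℚ) ((rd G / rd F).denom ^ 2) ≠ 0 :=
    RatFunc.algebraMap_ne_zero (pow_ne_zero 2 hB)
  have hQ2ne : algebraMap (Polynomial ℚ) (RatFunc ℚ) ((F - G).denom ^ 2) ≠ 0 :=
    RatFunc.algebraMap_ne_zero (pow_ne_zero 2 hQ)
  have hcne : algebraMap (Polynomial ℚ) (RatFunc ℚ) (Polynomial.C c) ≠ 0 :=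
    RatFunc.algebraMap_ne_zero (by simpa using hc)
  rw [div_div, div_mul_div_comm] at h
  rw [div_eq_div_iff hB2ne (mul_ne_zero (mul_ne_zero hQ2ne hcne) hBne)] at h
  simp only [map_sub, map_mul, map_pow] at h
  have hpoly : (Polynomial.derivative (rd G / rd F).num * (rd G / rd F).denom -
        (rd G / rd F).num * Polynomial.derivative (rd G / rd F).denom) *
      ((F - G).denom ^ 2 * Polynomial.C c * (rd G / rd F).denom) =
      (Polynomial.derivative (F - G).num * (F - G).denom -
        (F - G).num * Polynomial.derivative (F - G).denom) *
      (rd G / rd F).num * (rd G / rd F).denom ^ 2 := by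
    apply RatFunc.algebraMap_injective
    simp only [map_sub, map_mul, map_pow]
    linear_combination h
  have heqp : Polynomial.C c * (Polynomial.derivative (rd G / rd F).num * (rd G / rd F).denom -
        (rd G / rd F).num * Polynomial.derivative (rd G / rd F).denom) * (F - G).denom ^ 2 =
      (Polynomial.derivative (F - G).num * (F - G).denom -
        (F - G).num * Polynomial.derivative (F - G).denom) *
      ((rd G / rd F).num * (rd G / rd F).denom) := by
    apply mul_right_cancel₀ hB
    linear_combination hpoly
  have hzero := core (rd G / rd F).num (rd G / rd F).denom (F - G).num (F - G).denom c hc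
    hA hB hQ (RatFunc.isCoprime_num_denom _) (RatFunc.isCoprime_num_denom _) heqp
  have hrd0 : rd (F - G) = 0 := by
    rw [hrdT, hzero, map_zero, zero_div]
  exact rd_eq_zero hrd0
end
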